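/- Let ℓ ≥ 1, R = 𝔽₂[X]/(X^ℓ-1), A a free R-module with 𝔽₂-Hamming weight, and let D^A be an (e₀,e₁,γ)-noisy-syndrome decoder for an R-linear map ∂^A : A₁ → A₀, i.e., for all c₁ ∈ A₁ with |c₁| ≤ e₁ and c₀ ∈ A₀ with |c₀| ≤ e₀ we have |D^A(c₀ + ∂^A c₁) - c₁| ≤ γ|c₀|. Suppose x ∈ A₀ with 2|x| ≤ e₀, and ỹ, y ∈ A₁ are such that for all 1 ≤ k ≤ t, |Σ_{i∈[0,k)} Xⁱ(y - ỹ)| ≤ e₁. Let s = (1+X)x + ∂^A y. Then for every 1 ≤ k ≤ t, defining ã_k = D^A(Σ_{i∈[0,k)} Xⁱ(s - ∂^A ỹ)) and a_k = Σ_{i∈[0,k)} Xⁱ(y - ỹ), we have |ã_k - a_k| ≤ 2γ|x|. -/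

import Mathlib

/-!
Since `∂^A` commutes with `X`, the prefix sum `∑_{i<k} Xⁱ(s - ∂^A ỹ)` telescopes to
`(1 + X^k) x + ∂^A a_k`: a syndrome of the error `a_k` corrupted by the noise `(1 + X^k) x`,
whose weight is at most `2|x| ≤ e₀` because multiplication by `X^k` permutes coordinates.
The decoding guarantee then bounds the error by `γ · 2|x|`.
-/

open Finset

/-- Multiplication by `X^k` on the free module `R^n`, `R = 𝔽₂[X]/(X^ℓ-1)`,
in coefficient coordinates: `(X^k · a)_{j,i} = a_{j, i-k}`. -/
def shiftk (ℓ n : ℕ) (k : ℕ) (a : Fin n × ZMod ℓ → ZMod 2) : Fin n × ZMod ℓ → ZMod 2 :=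
  fun p => a (p.1, p.2 - (k : ZMod ℓ))

theorem hammingNorm_add_le {ι : Type*} [Fintype ι] {β : ι → Type*} [∀ i, AddZeroClass (β i)]
    [∀ i, DecidableEq (β i)] (x y : ∀ i, β i) :
    hammingNorm (x + y) ≤ hammingNorm x + hammingNorm y := by
  classical
  refine (card_le_card fun i hi => ?_).trans (card_union_le _ _)
  contrapose! hi
  simp_all

theorem hammingNorm_comp_equiv {ι κ β : Type*} [Fintype ι] [Fintype κ] [Zero β] [DecidableEq β]
    (e : κ ≃ ι) (x : ι → β) : hammingNorm (x ∘ e) = hammingNorm x :=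
  card_equiv e (by simp)

theorem sum_range_add_succ {ι R : Type*} [Ring R] [CharP R 2] (f : ℕ → ι → R) (k : ℕ) :
    ∑ i ∈ range k, (f i + f (i + 1)) = f 0 + f k := by
  have sub_eq_add (a b : ι → R) : a - b = a + b := funext fun p => CharTwo.sub_eq_add (a p) (b p)
  have telescope := sum_range_sub f k
  simp only [sub_eq_add] at telescope
  rw [add_comm (f 0), ← telescope]
  exact sum_congr rfl fun i _ => add_comm _ _

section shiftk

variable {ℓ n : ℕ}

theorem shiftk_add (k : ℕ) (a b : Fin n × ZMod ℓ → ZMod 2) :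
    shiftk ℓ n k (a + b) = shiftk ℓ n k a + shiftk ℓ n k b := rfl

theorem shiftk_zero (a : Fin n × ZMod ℓ → ZMod 2) : shiftk ℓ n 0 a = a := by
  funext p
  simp [shiftk]

theorem shiftk_shiftk (i j : ℕ) (a : Fin n × ZMod ℓ → ZMod 2) :
    shiftk ℓ n i (shiftk ℓ n j a) = shiftk ℓ n (i + j) a := by
  funext p
  simp only [shiftk, Nat.cast_add, sub_sub]

theorem shiftk_eq_iterate (k : ℕ) : shiftk ℓ n k = (shiftk ℓ n 1)^[k] := by
  induction k with
  | zero => funext a; exact shiftk_zero a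
  | succ k ih => funext a; rw [Function.iterate_succ_apply', ← ih, shiftk_shiftk, add_comm]

theorem hammingNorm_shiftk [NeZero ℓ] (k : ℕ) (a : Fin n × ZMod ℓ → ZMod 2) :
    hammingNorm (shiftk ℓ n k a) = hammingNorm a :=
  hammingNorm_comp_equiv ((Equiv.refl _).prodCongr (Equiv.subRight (k : ZMod ℓ))) a

theorem hammingNorm_add_shiftk_le [NeZero ℓ] (k : ℕ) (a : Fin n × ZMod ℓ → ZMod 2) :
    hammingNorm (a + shiftk ℓ n k a) ≤ 2 * hammingNorm a := by
  calc hammingNorm (a + shiftk ℓ n k a) ≤ hammingNorm a + hammingNorm (shiftk ℓ n k a) :=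
        hammingNorm_add_le _ _
    _ = 2 * hammingNorm a := by rw [hammingNorm_shiftk, two_mul]

theorem sum_range_shiftk_add_shiftk_one (a : Fin n × ZMod ℓ → ZMod 2) (k : ℕ) :
    ∑ i ∈ range k, shiftk ℓ n i (a + shiftk ℓ n 1 a) = a + shiftk ℓ n k a := by
  simp only [shiftk_add, shiftk_shiftk]
  rw [sum_range_add_succ (fun i => shiftk ℓ n i a), shiftk_zero]

end shiftk

theorem sum_range_shiftk_syndrome {ℓ n₁ n₀ : ℕ}
    (dA : (Fin n₁ × ZMod ℓ → ZMod 2) →ₗ[ZMod 2] (Fin n₀ × ZMod ℓ → ZMod 2))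
    (hcomm : Function.Semiconj dA (shiftk ℓ n₁ 1) (shiftk ℓ n₀ 1))
    (x : Fin n₀ × ZMod ℓ → ZMod 2) (z : Fin n₁ × ZMod ℓ → ZMod 2) (k : ℕ) :
    ∑ i ∈ range k, shiftk ℓ n₀ i ((x + shiftk ℓ n₀ 1 x) + dA z) =
      (x + shiftk ℓ n₀ k x) + dA (∑ i ∈ range k, shiftk ℓ n₁ i z) := by
  have map_shiftk (i : ℕ) : dA (shiftk ℓ n₁ i z) = shiftk ℓ n₀ i (dA z) := by
    rw [shiftk_eq_iterate i, shiftk_eq_iterate i]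
    exact hcomm.iterate_right i z
  rw [map_sum, ← sum_range_shiftk_add_shiftk_one x k, ← sum_add_distrib]
  simp only [map_shiftk, shiftk_add]

/-- prefix-sum noisy-syndrome decoding accuracy: with `D^A` an
`(e₀,e₁,γ)`-noisy-syndrome decoder for the `R_ℓ`-linear map `∂^A` (linearity over `R_ℓ`
is expressed by `𝔽₂`-linearity plus commuting with the `X`-shift), `2|x| ≤ e₀`,
all prefix sums `∑_{i<k} Xⁱ(y-ỹ)` for `1 ≤ k ≤ t` of weight `≤ e₁`, and
`s = (1+X)x + ∂^A y`: for every `1 ≤ k ≤ t`,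
`|D^A(∑_{i<k} Xⁱ(s - ∂^A ỹ)) - ∑_{i<k} Xⁱ(y-ỹ)| ≤ 2γ|x|`. -/
theorem stmt14 (ℓ : ℕ) [NeZero ℓ] {n₁ n₀ : ℕ} (e₀ e₁ : ℕ) (γ : ℝ) (hγ : 0 ≤ γ)
    (dA : (Fin n₁ × ZMod ℓ → ZMod 2) →ₗ[ZMod 2] (Fin n₀ × ZMod ℓ → ZMod 2))
    (hcomm : ∀ a, dA (shiftk ℓ n₁ 1 a) = shiftk ℓ n₀ 1 (dA a))
    (DA : (Fin n₀ × ZMod ℓ → ZMod 2) → (Fin n₁ × ZMod ℓ → ZMod 2))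
    (hDA : ∀ (c₁ : Fin n₁ × ZMod ℓ → ZMod 2) (c₀ : Fin n₀ × ZMod ℓ → ZMod 2),
      hammingNorm c₁ ≤ e₁ → hammingNorm c₀ ≤ e₀ →
      (hammingNorm (DA (c₀ + dA c₁) - c₁) : ℝ) ≤ γ * hammingNorm c₀)
    (t : ℕ) (x : Fin n₀ × ZMod ℓ → ZMod 2) (hx : 2 * hammingNorm x ≤ e₀)
    (y yt : Fin n₁ × ZMod ℓ → ZMod 2)
    (hpre : ∀ k, 1 ≤ k → k ≤ t →
      hammingNorm (∑ i ∈ Finset.range k, shiftk ℓ n₁ i (y - yt)) ≤ e₁)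
    (s : Fin n₀ × ZMod ℓ → ZMod 2)
    (hs : s = (x + shiftk ℓ n₀ 1 x) + dA y) :
    ∀ k, 1 ≤ k → k ≤ t →
      (hammingNorm
          (DA (∑ i ∈ Finset.range k, shiftk ℓ n₀ i (s - dA yt)) -
            ∑ i ∈ Finset.range k, shiftk ℓ n₁ i (y - yt)) : ℝ) ≤
        2 * γ * hammingNorm x := by
  intro k hk1 hkt
  have hsyndrome : s - dA yt = (x + shiftk ℓ n₀ 1 x) + dA (y - yt) := by
    rw [hs, map_sub]
    abel
  have hnoise := hammingNorm_add_shiftk_le k x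
  rw [hsyndrome, sum_range_shiftk_syndrome dA hcomm]
  calc _ ≤ γ * hammingNorm (x + shiftk ℓ n₀ k x) := hDA _ _ (hpre k hk1 hkt) (hnoise.trans hx)
    _ ≤ γ * (2 * hammingNorm x) := by gcongr; exact_mod_cast hnoise
    _ = 2 * γ * hammingNorm x := by ring
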